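/- Gradient of the discounted state visitation distribution (Lemma C.1). In the finite discounted setting, let θ ↦ π_θ be a differentiably parameterized policy (θ ∈ ℝ, π_θ(a|s) > 0 for all s,a, θ ↦ π_θ(a|s) differentiable). Then for every state s' ∈ 𝒮, the map θ ↦ d_μ^{π_θ}(s') is differentiable and (d/dθ) d_μ^{π_θ}(s') = (1/(1−γ))·Σ_{(s,a)} d_μ^{π_θ}(s,a)·((d/dθ) π_θ(a|s) / π_θ(a|s))·d_{s,a}^{π_θ}(s'), where d_μ^{π}(s') = (1−γ)Σ_{t=0}^∞ γ^t Pr(s_t = s' | s_0 ∼ μ; π) is the discounted state visitation distribution, d_μ^π(s,a) = d_μ^π(s)·π(a|s) is the discounted state-action visitation distribution, and d_{s,a}^π(s') is the discounted state visitation distribution of the process started with s_0 = s, a_0 = a. -/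

import Mathlib

/-!
With `M_π s s' = ∑ₐ π(a|s) P(s'|s,a)` the state transition matrix, the visitation distributions
are read off the resolvent `G = (1 - γ M_π)⁻¹ = ∑ₜ γᵗ M_πᵗ`:
`d_μ = (1 - γ) μᵀ G` and `d_{s,a} = (1 - γ) (e_s + γ P(·|s,a)ᵀ G)`.
Differentiating the resolvent gives `∂_θ d_μ = (1 - γ) γ μᵀ G (∂_θ M_π) G`, and expanding
`∂_θ M_π = ∑ₐ ∂_θ π(a|·) P(·|·,a)` yields the claimed sum; the extra `e_s` in `d_{s,a}`
contributes nothing because `∑ₐ ∂_θ π(a|s) = 0`.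
-/

open Finset

/-- `prFrom P π s0 a0 t s`: probability that the process started with `s_0 = s0`,
`a_0 = a0` (subsequent actions from the stationary policy `π`, states evolving by `P`)
is at state `s` at time `t`. -/
noncomputable def prFrom {S A : Type} [Fintype S] [Fintype A] [DecidableEq S]
    (P : S → A → S → ℝ) (π : S → A → ℝ) (s0 : S) (a0 : A) : ℕ → S → ℝ
  | 0 => fun s => if s = s0 then 1 else 0
  | 1 => fun s => P s0 a0 s
  | t + 2 => fun s =>
      ∑ s' : S, ∑ a' : A, prFrom P π s0 a0 (t + 1) s' * π s' a' * P s' a' s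

/-- Discounted state visitation distribution started from `(s0, a0)`. -/
noncomputable def dvisit {S A : Type} [Fintype S] [Fintype A] [DecidableEq S]
    (P : S → A → S → ℝ) (π : S → A → ℝ) (γ : ℝ) (s0 : S) (a0 : A) (s' : S) : ℝ :=
  (1 - γ) * ∑' t : ℕ, γ ^ t * prFrom P π s0 a0 t s'

/-- `prMu P π μ t s`: probability that the process with initial distribution `μ` and
stationary policy `π` is at state `s` at time `t`. -/
noncomputable def prMu {S A : Type} [Fintype S] [Fintype A]
    (P : S → A → S → ℝ) (π : S → A → ℝ) (μ : S → ℝ) : ℕ → S → ℝ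
  | 0 => μ
  | t + 1 => fun s => ∑ s' : S, ∑ a' : A, prMu P π μ t s' * π s' a' * P s' a' s

/-- Discounted state visitation distribution `d_μ^π(s') = (1−γ) ∑ γ^t Pr(s_t = s')`. -/
noncomputable def dstate {S A : Type} [Fintype S] [Fintype A]
    (P : S → A → S → ℝ) (π : S → A → ℝ) (γ : ℝ) (μ : S → ℝ) (s' : S) : ℝ :=
  (1 - γ) * ∑' t : ℕ, γ ^ t * prMu P π μ t s'

open scoped Ring Matrix

-- The ℓ∞ operator norm, for which row-stochastic matrices have norm at most `1`.
attribute [local instance] Matrix.linftyOpNormedAddCommGroup Matrix.linftyOpNormedSpace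
  Matrix.linftyOpNormedRing Matrix.linftyOpNormedAlgebra

theorem HasDerivAt.ringInverse {𝕜 R : Type*} [NontriviallyNormedField 𝕜] [NormedRing R]
    [NormedAlgebra 𝕜 R] [HasSummableGeomSeries R] {f : 𝕜 → R} {f' : R} {x : 𝕜}
    (hf : HasDerivAt f f' x) (hx : IsUnit (f x)) :
    HasDerivAt (fun t => (f t)⁻¹ʳ) (-((f x)⁻¹ʳ * f' * (f x)⁻¹ʳ)) x := by
  obtain ⟨u, hu⟩ := hx
  have hinv := hasFDerivAt_ringInverse (𝕜 := 𝕜) u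
  rw [hu] at hinv
  rw [← hu, Ring.inverse_unit]
  exact (hinv.comp_hasDerivAt x hf).congr_deriv (by simp)

namespace Matrix

variable {m n : Type*} [Fintype m] [Fintype n]

theorem linfty_opNorm_le_one_of_mem_rowStochastic [DecidableEq n] {M : Matrix n n ℝ}
    (hM : M ∈ rowStochastic ℝ n) : ‖M‖ ≤ 1 := by
  have hrow (i : n) : ∑ j, ‖M i j‖₊ = 1 := by
    ext
    simp [Real.norm_of_nonneg (nonneg_of_mem_rowStochastic hM), sum_row_of_mem_rowStochastic hM i]
  rw [linfty_opNorm_def]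
  exact_mod_cast Finset.sup_le fun i _ => (hrow i).le

noncomputable def vecMulApplyCLM (v : m → ℝ) (j : n) : Matrix m n ℝ →L[ℝ] ℝ :=
  LinearMap.toContinuousLinearMap
    { toFun X := (v ᵥ* X) j
      map_add' X Y := by simp [vecMul_add]
      map_smul' c X := by simp [vecMul_smul] }

@[simp]
theorem vecMulApplyCLM_apply (v : m → ℝ) (j : n) (X : Matrix m n ℝ) :
    vecMulApplyCLM v j X = (v ᵥ* X) j := rfl

theorem _root_.HasDerivAt.vecMul_apply {X : ℝ → Matrix m n ℝ} {X' : Matrix m n ℝ} {θ : ℝ}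
    (h : HasDerivAt X X' θ) (v : m → ℝ) (j : n) :
    HasDerivAt (fun θ => (v ᵥ* X θ) j) ((v ᵥ* X') j) θ :=
  (vecMulApplyCLM v j).hasFDerivAt.comp_hasDerivAt θ h

theorem hasSum_geom_mul_vecMul_pow_apply [DecidableEq n] {M : Matrix n n ℝ} {γ : ℝ}
    (h : ‖γ • M‖ < 1) (v : n → ℝ) (j : n) :
    HasSum (fun t => γ ^ t * (v ᵥ* M ^ t) j) ((v ᵥ* (1 - γ • M)⁻¹ʳ) j) := by
  simpa [smul_pow] using (hasSum_geom_series_inverse (γ • M) h).mapL (vecMulApplyCLM v j)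

end Matrix

section MDP

variable {S A : Type} [Fintype S] [Fintype A]

noncomputable def transitionMatrix (P : S → A → S → ℝ) (π : S → A → ℝ) : Matrix S S ℝ :=
  Matrix.of fun s s' => ∑ a, π s a * P s a s'

theorem sum_sum_mul_eq_vecMul_transitionMatrix (P : S → A → S → ℝ) (π : S → A → ℝ)
    (v : S → ℝ) (s : S) :
    ∑ s', ∑ a, v s' * π s' a * P s' a s = (v ᵥ* transitionMatrix P π) s := by
  simp only [Matrix.vecMul, dotProduct, transitionMatrix, Matrix.of_apply, mul_sum,
    mul_assoc]

theorem hasDerivAt_transitionMatrix (P : S → A → S → ℝ) {pol : ℝ → S → A → ℝ}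
    {pol' : S → A → ℝ} {θ : ℝ} (h : HasDerivAt pol pol' θ) :
    HasDerivAt (fun θ => transitionMatrix P (pol θ)) (transitionMatrix P pol') θ :=
  let L : (S → A → ℝ) →ₗ[ℝ] Matrix S S ℝ :=
    { toFun := transitionMatrix P
      map_add' π π' := by ext; simp [transitionMatrix, add_mul, sum_add_distrib]
      map_smul' c π := by ext; simp [transitionMatrix, mul_sum, mul_assoc] }
  L.toContinuousLinearMap.hasFDerivAt.comp_hasDerivAt θ h

variable [DecidableEq S]

theorem transitionMatrix_mem_rowStochastic {P : S → A → S → ℝ}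
    {π : S → A → ℝ} (hP : ∀ s a, (∀ s', 0 ≤ P s a s') ∧ ∑ s', P s a s' = 1)
    (hπ_nonneg : ∀ s a, 0 ≤ π s a) (hπ_sum : ∀ s, ∑ a, π s a = 1) :
    transitionMatrix P π ∈ Matrix.rowStochastic ℝ S := by
  refine Matrix.mem_rowStochastic_iff_sum.2 ⟨fun s s' => ?_, fun s => ?_⟩
  · exact sum_nonneg fun a _ => mul_nonneg (hπ_nonneg s a) ((hP s a).1 s')
  · simp only [transitionMatrix, Matrix.of_apply]
    rw [sum_comm]
    simp [← mul_sum, (hP s _).2, hπ_sum]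

theorem prMu_eq_vecMul_pow (P : S → A → S → ℝ) (π : S → A → ℝ) (μ : S → ℝ) (t : ℕ) :
    prMu P π μ t = μ ᵥ* transitionMatrix P π ^ t := by
  induction t with
  | zero => simp [prMu]
  | succ t ih =>
    ext s
    simp only [prMu, sum_sum_mul_eq_vecMul_transitionMatrix, ih, pow_succ, Matrix.vecMul_vecMul]

theorem prFrom_succ_eq_vecMul_pow (P : S → A → S → ℝ) (π : S → A → ℝ)
    (s₀ : S) (a₀ : A) (t : ℕ) :
    prFrom P π s₀ a₀ (t + 1) = P s₀ a₀ ᵥ* transitionMatrix P π ^ t := by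
  induction t with
  | zero => ext; simp [prFrom]
  | succ t ih =>
    ext s
    simp only [prFrom, sum_sum_mul_eq_vecMul_transitionMatrix, ih, pow_succ, Matrix.vecMul_vecMul]

theorem dstate_eq_vecMul_resolvent {P : S → A → S → ℝ} {π : S → A → ℝ} {γ : ℝ}
    (h : ‖γ • transitionMatrix P π‖ < 1) (μ : S → ℝ) (s' : S) :
    dstate P π γ μ s' = (1 - γ) * (μ ᵥ* (1 - γ • transitionMatrix P π)⁻¹ʳ) s' := by
  simp only [dstate, prMu_eq_vecMul_pow, (Matrix.hasSum_geom_mul_vecMul_pow_apply h μ s').tsum_eq]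

theorem dvisit_eq_vecMul_resolvent {P : S → A → S → ℝ} {π : S → A → ℝ} {γ : ℝ}
    (h : ‖γ • transitionMatrix P π‖ < 1) (s₀ : S) (a₀ : A) (s' : S) :
    dvisit P π γ s₀ a₀ s' = (1 - γ) * ((if s' = s₀ then 1 else 0) +
      γ * (P s₀ a₀ ᵥ* (1 - γ • transitionMatrix P π)⁻¹ʳ) s') := by
  have hsucc := (Matrix.hasSum_geom_mul_vecMul_pow_apply h (P s₀ a₀) s').mul_left γ
  simp only [← mul_assoc, ← pow_succ', ← prFrom_succ_eq_vecMul_pow] at hsucc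
  have hsum := (hasSum_nat_add_iff (f := fun t => γ ^ t * prFrom P π s₀ a₀ t s') 1).1 hsucc
  rw [dvisit, hsum.tsum_eq]
  simp [prFrom, add_comm]

theorem sum_mul_visit_eq_vecMul_transitionMatrix_mul (P : S → A → S → ℝ) {π' : S → A → ℝ}
    (hπ' : ∀ s, ∑ a, π' s a = 0) (w : S → ℝ) (G : Matrix S S ℝ) (γ : ℝ) (s' : S) :
    ∑ q : S × A, w q.1 * π' q.1 q.2 * ((if s' = q.1 then 1 else 0) + γ * (P q.1 q.2 ᵥ* G) s')
      = γ * (w ᵥ* (transitionMatrix P π' * G)) s' := by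
  have hrow (s : S) : (transitionMatrix P π' * G) s s' = ∑ a, π' s a * (P s a ᵥ* G) s' := by
    simp only [Matrix.mul_apply, transitionMatrix, Matrix.of_apply, Matrix.vecMul, dotProduct,
      sum_mul, mul_sum, mul_assoc]
    exact sum_comm
  have hstart (s : S) : ∑ a, w s * π' s a * (if s' = s then 1 else 0) = 0 := by
    simp [← mul_sum, hπ']
  have hvecMul : (w ᵥ* (transitionMatrix P π' * G)) s' =
      ∑ s, w s * (transitionMatrix P π' * G) s s' := rfl
  simp only [Fintype.sum_prod_type, mul_add, sum_add_distrib, hstart,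
    sum_const_zero, zero_add, hvecMul, hrow, mul_sum]
  exact sum_congr rfl fun s _ => sum_congr rfl fun a _ => by ring

end MDP

theorem grad_discounted_state_visitation_general
    (S A : Type) [Fintype S] [Fintype A] [DecidableEq S]
    (P : S → A → S → ℝ) (μ : S → ℝ) (γ : ℝ)
    (hP : ∀ s a, (∀ s', 0 ≤ P s a s') ∧ ∑ s', P s a s' = 1)
    (hγ : γ ∈ Set.Ioo (0 : ℝ) 1)
    (pol : ℝ → S → A → ℝ)
    (hpos : ∀ θ s a, 0 < pol θ s a)
    (hsum : ∀ θ s, ∑ a, pol θ s a = 1)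
    (hdiff : ∀ s a, Differentiable ℝ (fun θ => pol θ s a)) :
    ∀ (θ₀ : ℝ) (s' : S),
      HasDerivAt (fun θ => dstate P (pol θ) γ μ s')
        ((1 / (1 - γ)) * ∑ q : S × A,
          (dstate P (pol θ₀) γ μ q.1 * pol θ₀ q.1 q.2) *
            (deriv (fun θ => pol θ q.1 q.2) θ₀ / pol θ₀ q.1 q.2) *
              dvisit P (pol θ₀) γ q.1 q.2 s') θ₀ := by
  intro θ₀ s'
  set pol' : S → A → ℝ := fun s a => deriv (fun θ => pol θ s a) θ₀
  have hnorm (θ : ℝ) : ‖γ • transitionMatrix P (pol θ)‖ < 1 := by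
    have hM := Matrix.linfty_opNorm_le_one_of_mem_rowStochastic
      (transitionMatrix_mem_rowStochastic hP (fun s a => (hpos θ s a).le) (hsum θ))
    rw [norm_smul, Real.norm_of_nonneg hγ.1.le]
    exact (mul_le_of_le_one_right hγ.1.le hM).trans_lt hγ.2
  have hpol : HasDerivAt pol pol' θ₀ :=
    hasDerivAt_pi.2 fun s => hasDerivAt_pi.2 fun a => (hdiff s a θ₀).hasDerivAt
  have hpol'_sum (s : S) : ∑ a, pol' s a = 0 := by
    have hconst : HasDerivAt (fun θ => ∑ a, pol θ s a) (∑ a, pol' s a) θ₀ :=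
      HasDerivAt.fun_sum fun a _ => (hdiff s a θ₀).hasDerivAt
    simp only [hsum] at hconst
    exact hconst.unique (hasDerivAt_const θ₀ 1)
  set G := (1 - γ • transitionMatrix P (pol θ₀))⁻¹ʳ
  have hG : HasDerivAt (fun θ => (1 - γ • transitionMatrix P (pol θ))⁻¹ʳ)
      (-(G * -(γ • transitionMatrix P pol') * G)) θ₀ :=
    (((hasDerivAt_transitionMatrix P hpol).const_smul γ).const_sub 1).ringInverse
      (isUnit_one_sub_of_norm_lt_one (hnorm θ₀))
  simp only [funext fun θ => dstate_eq_vecMul_resolvent (hnorm θ) μ s']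
  refine ((hG.vecMul_apply μ s').const_mul (1 - γ)).congr_deriv (Eq.symm ?_)
  have hγ1 : 1 - γ ≠ 0 := (sub_pos.2 hγ.2).ne'
  calc _ = (1 - γ) * ∑ q : S × A, (μ ᵥ* G) q.1 * pol' q.1 q.2 *
        ((if s' = q.1 then 1 else 0) + γ * (P q.1 q.2 ᵥ* G) s') := by
        simp only [dstate_eq_vecMul_resolvent (hnorm θ₀), dvisit_eq_vecMul_resolvent (hnorm θ₀),
          mul_sum]
        refine sum_congr rfl fun q _ => ?_
        have hq := (hpos θ₀ q.1 q.2).ne'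
        field_simp
        rfl
    _ = (1 - γ) * (γ * ((μ ᵥ* G) ᵥ* (transitionMatrix P pol' * G)) s') := by
        rw [sum_mul_visit_eq_vecMul_transitionMatrix_mul P hpol'_sum]
    _ = _ := by
        simp [Matrix.vecMul_vecMul, Matrix.vecMul_smul, Matrix.mul_assoc]

/-- **Gradient of the discounted state visitation distribution (Lemma C.1).**
For a differentiably parameterized policy `θ ↦ π_θ` with `π_θ(a|s) > 0`, the map
`θ ↦ d_μ^{π_θ}(s')` is differentiable with derivative
`(1/(1−γ))·∑_{(s,a)} d_μ^{π_θ}(s,a)·(∂_θ π_θ(a|s)/π_θ(a|s))·d_{s,a}^{π_θ}(s')`,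
where `d_μ^{π}(s,a) = d_μ^{π}(s)·π(a|s)`. -/
theorem grad_discounted_state_visitation
    (S A : Type) [Fintype S] [Fintype A] [DecidableEq S]
    (P : S → A → S → ℝ) (μ : S → ℝ) (γ : ℝ)
    (hP : ∀ s a, (∀ s', 0 ≤ P s a s') ∧ ∑ s', P s a s' = 1)
    (hμ : (∀ s, 0 ≤ μ s) ∧ ∑ s, μ s = 1)
    (hγ : γ ∈ Set.Ioo (0 : ℝ) 1)
    (pol : ℝ → S → A → ℝ)
    (hpos : ∀ θ s a, 0 < pol θ s a)
    (hsum : ∀ θ s, ∑ a, pol θ s a = 1)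
    (hdiff : ∀ s a, Differentiable ℝ (fun θ => pol θ s a)) :
    ∀ (θ₀ : ℝ) (s' : S),
      HasDerivAt (fun θ => dstate P (pol θ) γ μ s')
        ((1 / (1 - γ)) * ∑ q : S × A,
          (dstate P (pol θ₀) γ μ q.1 * pol θ₀ q.1 q.2) *
            (deriv (fun θ => pol θ q.1 q.2) θ₀ / pol θ₀ q.1 q.2) *
              dvisit P (pol θ₀) γ q.1 q.2 s') θ₀ :=
  grad_discounted_state_visitation_general S A P μ γ hP hγ pol hpos hsum hdiff
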